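/- The digital 𝟏-annihilation operator a₁ : V^⊗(n+1) → V^⊗n over Z₂ sends the basis element 𝟎 ⊗ 𝟎 ⊗ ⋯ ⊗ 𝟎 to 0, and sends every other basis element to a nonzero element; in particular a₁ is surjective for n ≥ 0. -/

import Mathlib

open Finset

/-- The basis element of `V^{⊗n}` (over `ℤ₂`) indexed by the Bool string `y`
(`true` = 𝟏, `false` = 𝟎), as an element of the function model `(Fin n → Bool) → ZMod 2`. -/
def sgl {n : ℕ} (y : Fin n → Bool) : (Fin n → Bool) → ZMod 2 :=
  fun z => if z = y then 1 else 0

/-- The 𝟏-grading: number of 𝟏 (`true`) factors. -/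
def ones {n : ℕ} (x : Fin n → Bool) : ℕ :=
  (Finset.univ.filter fun i => x i = true).card

/-- The 𝟎-grading: number of 𝟎 (`false`) factors. -/
def zeros {n : ℕ} (x : Fin n → Bool) : ℕ :=
  (Finset.univ.filter fun i => x i = false).card

/-- The image of a basis element under the digital 𝟏-annihilation operator
`a₁ : V^{⊗(n+1)} → V^{⊗n}` (annihilating the first factor):
`a₁(𝟏 ⊗ x) = x` and `a₁(𝟎 ⊗ x) = Σ_{i : xᵢ = 𝟏} (x with xᵢ replaced by 𝟎)`. -/
def a1B {n : ℕ} (x : Fin (n + 1) → Bool) : (Fin n → Bool) → ZMod 2 :=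
  if x 0 = true then sgl (Fin.tail x)
  else ∑ i ∈ Finset.univ.filter fun i => Fin.tail x i = true,
    sgl (Function.update (Fin.tail x) i false)

/-- The digital 𝟏-annihilation operator, extended `ℤ₂`-linearly. -/
def a1 {n : ℕ} (f : (Fin (n + 1) → Bool) → ZMod 2) : (Fin n → Bool) → ZMod 2 :=
  ∑ x : Fin (n + 1) → Bool, f x • a1B x

lemma sgl_eq_single {n : ℕ} (y : Fin n → Bool) : sgl y = Pi.single y 1 := by
  funext z
  simp [sgl, Pi.single_apply]

lemma sgl_ne_zero {n : ℕ} (y : Fin n → Bool) : sgl y ≠ 0 := by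
  simp [sgl_eq_single]

lemma a1B_cons_true {n : ℕ} (y : Fin n → Bool) : a1B (Fin.cons true y) = sgl y := by
  simp [a1B]

lemma a1B_cons_false {n : ℕ} (y : Fin n → Bool) :
    a1B (Fin.cons false y) =
      ∑ i ∈ univ.filter (fun i => y i = true), sgl (Function.update y i false) := by
  simp [a1B]

lemma a1B_const_false (n : ℕ) : a1B (n := n) (fun _ => false) = 0 := by
  simp [a1B, Fin.tail]

lemma Function.update_false_eq_update_false_iff {ι : Type*} [DecidableEq ι] {y : ι → Bool}
    {i j : ι} (hi : y i = true) :
    Function.update y j false = Function.update y i false ↔ j = i := by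
  refine ⟨fun h => ?_, fun h => h ▸ rfl⟩
  by_contra hji
  simpa [Function.update_of_ne (Ne.symm hji), hi] using congrFun h i

/-- Lowering the `j`-th 𝟏 of `y` is reached by exactly one summand of `a₁(𝟎 ⊗ y)`. -/
lemma a1B_cons_false_apply_update {n : ℕ} {y : Fin n → Bool} {j : Fin n} (hj : y j = true) :
    a1B (Fin.cons false y) (Function.update y j false) = 1 := by
  rw [a1B_cons_false, Finset.sum_apply]
  calc ∑ i ∈ univ.filter (fun i => y i = true),
          sgl (Function.update y i false) (Function.update y j false)
      = ∑ i ∈ univ.filter (fun i => y i = true), if j = i then (1 : ZMod 2) else 0 :=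
        Finset.sum_congr rfl fun i hi => by
          simp only [sgl, Function.update_false_eq_update_false_iff (Finset.mem_filter.mp hi).2]
    _ = 1 := by simp [hj]

lemma a1B_ne_zero {n : ℕ} {x : Fin (n + 1) → Bool} (hx : x ≠ fun _ => false) : a1B x ≠ 0 := by
  induction x using Fin.consCases with
  | cons b y =>
    cases b with
    | true => simpa [a1B_cons_true] using sgl_ne_zero y
    | false =>
      obtain ⟨j, hj⟩ : ∃ j, y j = true := by
        by_contra! h
        exact hx (funext fun i => Fin.cases rfl (fun k => by simpa using h k) i)
      intro h0
      simpa [h0] using a1B_cons_false_apply_update hj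

lemma a1_eq_linearCombination (n : ℕ) :
    a1 (n := n) = Fintype.linearCombination (ZMod 2) a1B := by
  funext f
  simp [a1, Fintype.linearCombination_apply]

lemma a1_surjective (n : ℕ) : Function.Surjective (a1 (n := n)) := by
  rw [a1_eq_linearCombination, ← LinearMap.range_eq_top, Fintype.range_linearCombination,
    eq_top_iff, ← (Pi.basisFun (ZMod 2) (Fin n → Bool)).span_eq]
  refine Submodule.span_mono ?_
  rintro _ ⟨y, rfl⟩
  exact ⟨Fin.cons true y, by simp [a1B_cons_true, sgl_eq_single]⟩

/-- `a₁` sends the basis element `𝟎 ⊗ ⋯ ⊗ 𝟎` to `0`, sends every other basis element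
to a nonzero element, and is surjective. -/
theorem a1_kernel_and_surjective (n : ℕ) :
    a1B (n := n) (fun _ => false) = 0 ∧
    (∀ x : Fin (n + 1) → Bool, x ≠ (fun _ => false) → a1B x ≠ 0) ∧
    Function.Surjective (a1 (n := n)) :=
  ⟨a1B_const_false n, fun _ => a1B_ne_zero, a1_surjective n⟩
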